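/- With Q_k defined as Q_k = ‖y_{k+1}‖² + (ad-bc)·( y_{k+1}(1)/(cλ_k+d) - c·y_k(1)/(cλ_k+d)² )² at a triple eigenvalue λ_k (c λ_k + d ≠ 0), one has Q_k ≠ 0. The key observation is that replacing y_{k+1} by y_{k+1} + μ y_k leaves Q_k invariant for any real μ, and a suitable μ makes the boundary expression vanish so that Q_k equals the L²-norm squared of a nonzero function. -/

import Mathlib

open MeasureTheory Set

lemma int_sq_pos (f : ℝ → ℝ) (hf : ContinuousOn f (Icc (0:ℝ) 1))
    (hnn : ∀ x ∈ Icc (0:ℝ) 1, 0 ≤ f x)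
    (x0 : ℝ) (hx0 : x0 ∈ Icc (0:ℝ) 1) (hfx0 : 0 < f x0) :
    0 < ∫ x in (0:ℝ)..1, f x := by
  have huIcc : uIcc (0:ℝ) 1 = Icc 0 1 := uIcc_of_le zero_le_one
  have hint : IntervalIntegrable f volume 0 1 :=
    (huIcc ▸ hf).intervalIntegrable
  have h0 : 0 ≤ᵐ[volume.restrict (Set.uIoc (0:ℝ) 1)] f := by
    rw [uIoc_of_le (zero_le_one (α := ℝ)), Filter.EventuallyLE,
      ae_restrict_iff' measurableSet_Ioc]
    filter_upwards with x hx using hnn x ⟨hx.1.le, hx.2⟩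
  rw [intervalIntegral.integral_pos_iff_support_of_nonneg_ae' h0 hint]
  refine ⟨zero_lt_one, ?_⟩
  have hev : ∀ᶠ x in nhdsWithin x0 (Icc (0:ℝ) 1), 0 < f x :=
    (hf x0 hx0) (Ioi_mem_nhds hfx0)
  rcases Metric.mem_nhdsWithin_iff.mp hev with ⟨δ, hδ, hball⟩
  set l := max 0 (x0 - δ) with hl
  set r := min 1 (x0 + δ) with hr
  have hlr : l < r := by
    have h1 := hx0.1; have h2 := hx0.2
    simp only [hl, hr, max_lt_iff, lt_min_iff]
    constructor <;> constructor <;> linarith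
  have hsub : Ioo l r ⊆ Function.support f ∩ Ioc 0 1 := by
    intro x hx
    have hx1 : 0 < x := lt_of_le_of_lt (le_max_left _ _) hx.1
    have hx2 : x ≤ 1 := le_of_lt (lt_of_lt_of_le hx.2 (min_le_left _ _))
    have hxb : x ∈ Metric.ball x0 δ := by
      have h3 : x0 - δ < x := lt_of_le_of_lt (le_max_right _ _) hx.1
      have h4 : x < x0 + δ := lt_of_lt_of_le hx.2 (min_le_right _ _)
      rw [Metric.mem_ball, Real.dist_eq, abs_lt]; constructor <;> linarith
    have hpos : 0 < f x := hball ⟨hxb, ⟨hx1.le, hx2⟩⟩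
    exact ⟨Function.mem_support.mpr hpos.ne', ⟨hx1, hx2⟩⟩
  calc (0:ENNReal) < volume (Ioo l r) := (Measure.measure_Ioo_pos _).mpr hlr
    _ ≤ _ := measure_mono hsub

theorem Q_ne_zero
    (a b c d β : ℝ) (habcd : a * d - b * c < 0) (hac : a * c ≠ 0)
    (hβ0 : 0 ≤ β) (hβπ : β < Real.pi)
    (q : ℝ → ℝ) (hq : ContinuousOn q (Icc (0:ℝ) 1))
    (lam : ℝ) (hcd : c * lam + d ≠ 0)
    (y0 y0' y0'' y1 y1' y1'' : ℝ → ℝ)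
    (hy0 : ∀ x ∈ Icc (0:ℝ) 1, HasDerivAt y0 (y0' x) x)
    (hy0' : ∀ x ∈ Icc (0:ℝ) 1, HasDerivAt y0' (y0'' x) x)
    (hy0'' : ContinuousOn y0'' (Icc (0:ℝ) 1))
    (hy1 : ∀ x ∈ Icc (0:ℝ) 1, HasDerivAt y1 (y1' x) x)
    (hy1' : ∀ x ∈ Icc (0:ℝ) 1, HasDerivAt y1' (y1'' x) x)
    (hy1'' : ContinuousOn y1'' (Icc (0:ℝ) 1))
    (hode0 : ∀ x ∈ Icc (0:ℝ) 1, -y0'' x + q x * y0 x = lam * y0 x)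
    (hode1 : ∀ x ∈ Icc (0:ℝ) 1, -y1'' x + q x * y1 x = lam * y1 x + y0 x)
    (hbc00 : y0 0 * Real.cos β = y0' 0 * Real.sin β)
    (hbc01 : y1 0 * Real.cos β = y1' 0 * Real.sin β)
    (hbc10 : (a * lam + b) * y0 1 = (c * lam + d) * y0' 1)
    (hbc11 : (a * lam + b) * y1 1 + a * y0 1 = (c * lam + d) * y1' 1 + c * y0' 1)
    (y2 y2' y2'' : ℝ → ℝ)
    (hy2 : ∀ x ∈ Icc (0:ℝ) 1, HasDerivAt y2 (y2' x) x)
    (hy2' : ∀ x ∈ Icc (0:ℝ) 1, HasDerivAt y2' (y2'' x) x)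
    (hy2'' : ContinuousOn y2'' (Icc (0:ℝ) 1))
    (hode2 : ∀ x ∈ Icc (0:ℝ) 1, -y2'' x + q x * y2 x = lam * y2 x + y1 x)
    (hbc02 : y2 0 * Real.cos β = y2' 0 * Real.sin β)
    (hbc12 : (a * lam + b) * y2 1 + a * y1 1 = (c * lam + d) * y2' 1 + c * y1' 1)
    (hy0ne : ∃ x ∈ Icc (0:ℝ) 1, y0 x ≠ 0)
    (hind : ∀ μ : ℝ, ∃ x ∈ Icc (0:ℝ) 1, y1 x + μ * y0 x ≠ 0) :
    (∫ x in (0:ℝ)..1, (y1 x) ^ 2)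
      + (a * d - b * c)
          * (y1 1 / (c * lam + d) - c * y0 1 / (c * lam + d) ^ 2) ^ 2 ≠ 0 := by
  have huIcc : uIcc (0:ℝ) 1 = Icc 0 1 := uIcc_of_le zero_le_one
  set s : ℝ := c * lam + d with hs_def
  -- continuity
  have hy0c : ContinuousOn y0 (Icc (0:ℝ) 1) :=
    fun x hx => (hy0 x hx).continuousAt.continuousWithinAt
  have hy1c : ContinuousOn y1 (Icc (0:ℝ) 1) :=
    fun x hx => (hy1 x hx).continuousAt.continuousWithinAt
  -- integrability
  have hint00 : IntervalIntegrable (fun x => y0 x ^ 2) volume 0 1 :=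
    ((hy0c.pow 2).mono huIcc.subset).intervalIntegrable
  have hint10 : IntervalIntegrable (fun x => y1 x * y0 x) volume 0 1 :=
    ((hy1c.mul hy0c).mono huIcc.subset).intervalIntegrable
  have hint11 : IntervalIntegrable (fun x => y1 x ^ 2) volume 0 1 :=
    ((hy1c.pow 2).mono huIcc.subset).intervalIntegrable
  -- Wronskian FTC for ∫ y0² :
  have ftc0 : (∫ x in (0:ℝ)..1, y0 x ^ 2)
      = (y1 1 * y0' 1 - y1' 1 * y0 1) - (y1 0 * y0' 0 - y1' 0 * y0 0) := by
    refine intervalIntegral.integral_eq_sub_of_hasDerivAt (f := fun x => y1 x * y0' x - y1' x * y0 x) ?_ hint00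
    intro x hx
    rw [huIcc] at hx
    have h := ((hy1 x hx).mul (hy0' x hx)).sub ((hy1' x hx).mul (hy0 x hx))
    convert h using 1
    · rfl
    have e0 := hode0 x hx
    have e1 := hode1 x hx
    linear_combination y1 x * e0 - y0 x * e1
  have ftc1 : (∫ x in (0:ℝ)..1, y1 x * y0 x)
      = (y2 1 * y0' 1 - y2' 1 * y0 1) - (y2 0 * y0' 0 - y2' 0 * y0 0) := by
    refine intervalIntegral.integral_eq_sub_of_hasDerivAt (f := fun x => y2 x * y0' x - y2' x * y0 x) ?_ hint10
    intro x hx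
    rw [huIcc] at hx
    have h := ((hy2 x hx).mul (hy0' x hx)).sub ((hy2' x hx).mul (hy0 x hx))
    convert h using 1
    · rfl
    have e0 := hode0 x hx
    have e2 := hode2 x hx
    linear_combination y2 x * e0 - y0 x * e2
  -- Wronskians vanish at 0
  have hsc : Real.sin β ^ 2 + Real.cos β ^ 2 = 1 := Real.sin_sq_add_cos_sq β
  have hW0_10 : y1 0 * y0' 0 - y1' 0 * y0 0 = 0 := by
    have h1 : (y1 0 * y0' 0 - y1' 0 * y0 0) * Real.sin β = 0 := by
      linear_combination y0 0 * hbc01 - y1 0 * hbc00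
    have h2 : (y1 0 * y0' 0 - y1' 0 * y0 0) * Real.cos β = 0 := by
      linear_combination y0' 0 * hbc01 - y1' 0 * hbc00
    linear_combination Real.sin β * h1 + Real.cos β * h2
      - (y1 0 * y0' 0 - y1' 0 * y0 0) * hsc
  have hW0_20 : y2 0 * y0' 0 - y2' 0 * y0 0 = 0 := by
    have h1 : (y2 0 * y0' 0 - y2' 0 * y0 0) * Real.sin β = 0 := by
      linear_combination y0 0 * hbc02 - y2 0 * hbc00
    have h2 : (y2 0 * y0' 0 - y2' 0 * y0 0) * Real.cos β = 0 := by
      linear_combination y0' 0 * hbc02 - y2' 0 * hbc00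
    linear_combination Real.sin β * h1 + Real.cos β * h2
      - (y2 0 * y0' 0 - y2' 0 * y0 0) * hsc
  -- Wronskians at 1
  have hW1_10 : y1 1 * y0' 1 - y1' 1 * y0 1 = -(a * d - b * c) * (y0 1 / s) ^ 2 := by
    have hmul : (y1 1 * y0' 1 - y1' 1 * y0 1) * s ^ 2 = -(a * d - b * c) * y0 1 ^ 2 := by
      linear_combination (-(s * y1 1 + c * y0 1)) * hbc10 + s * y0 1 * hbc11
    have h2 : (s:ℝ) ^ 2 ≠ 0 := pow_ne_zero 2 hcd
    field_simp [h2] at hmul ⊢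
    linarith [hmul]
  have hW1_20 : y2 1 * y0' 1 - y2' 1 * y0 1
      = -(a * d - b * c) * (y1 1 / s - c * y0 1 / s ^ 2) * (y0 1 / s) := by
    have hmul : (y2 1 * y0' 1 - y2' 1 * y0 1) * s ^ 3
        = -(a * d - b * c) * (s * y1 1 * y0 1 - c * y0 1 ^ 2) := by
      linear_combination (c ^ 2 * y0 1 - s ^ 2 * y2 1) * hbc10
        - c * s * y0 1 * hbc11 + s ^ 2 * y0 1 * hbc12
    have h3 : (s:ℝ) ^ 3 ≠ 0 := pow_ne_zero 3 hcd
    have hdiv : y2 1 * y0' 1 - y2' 1 * y0 1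
        = (-(a * d - b * c) * (s * y1 1 * y0 1 - c * y0 1 ^ 2)) / s ^ 3 :=
      (eq_div_iff h3).mpr hmul
    rw [hdiv]
    field_simp
  -- key identities (4.7)
  have key0 : (∫ x in (0:ℝ)..1, y0 x ^ 2) = -(a * d - b * c) * (y0 1 / s) ^ 2 := by
    rw [ftc0, hW0_10, hW1_10]; ring
  have key1 : (∫ x in (0:ℝ)..1, y1 x * y0 x)
      = -(a * d - b * c) * (y1 1 / s - c * y0 1 / s ^ 2) * (y0 1 / s) := by
    rw [ftc1, hW0_20, hW1_20]; ring
  -- y0 1 ≠ 0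
  have hy01 : y0 1 ≠ 0 := by
    intro h0
    obtain ⟨x0, hx0, hx0ne⟩ := hy0ne
    have hpos : 0 < ∫ x in (0:ℝ)..1, y0 x ^ 2 :=
      int_sq_pos (fun x => y0 x ^ 2) (hy0c.pow 2) (fun x _ => sq_nonneg _)
        x0 hx0 (by positivity)
    rw [key0, h0] at hpos
    simp at hpos
  -- the shift
  set A1 : ℝ := y1 1 / s - c * y0 1 / s ^ 2 with hA1
  set A0 : ℝ := y0 1 / s with hA0
  have hA0ne : A0 ≠ 0 := div_ne_zero hy01 hcd
  set μ : ℝ := -(A1 / A0) with hμ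
  obtain ⟨x1, hx1, hx1ne⟩ := hind μ
  have hfpos : 0 < ∫ x in (0:ℝ)..1, (y1 x + μ * y0 x) ^ 2 :=
    int_sq_pos _ ((hy1c.add (continuousOn_const.mul hy0c)).pow 2)
      (fun x _ => sq_nonneg _) x1 hx1 (by positivity)
  -- expand
  have hexp : (∫ x in (0:ℝ)..1, (y1 x + μ * y0 x) ^ 2)
      = (∫ x in (0:ℝ)..1, y1 x ^ 2) + (2 * μ) * (∫ x in (0:ℝ)..1, y1 x * y0 x)
        + μ ^ 2 * (∫ x in (0:ℝ)..1, y0 x ^ 2) := by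
    have : (fun x => (y1 x + μ * y0 x) ^ 2)
        = fun x => y1 x ^ 2 + ((2 * μ) * (y1 x * y0 x) + μ ^ 2 * (y0 x ^ 2)) := by
      funext x; ring
    rw [this, intervalIntegral.integral_add hint11
      ((hint10.const_mul (2 * μ)).add (hint00.const_mul (μ ^ 2))),
      intervalIntegral.integral_add (hint10.const_mul (2 * μ)) (hint00.const_mul (μ ^ 2)),
      intervalIntegral.integral_const_mul, intervalIntegral.integral_const_mul]
    ring
  have hQ : (∫ x in (0:ℝ)..1, (y1 x) ^ 2) + (a * d - b * c) * A1 ^ 2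
      = ∫ x in (0:ℝ)..1, (y1 x + μ * y0 x) ^ 2 := by
    rw [hexp, key0, key1, hμ]
    field_simp
    ring
  rw [hQ]
  exact ne_of_gt hfpos
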